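/- arXiv:1904.00175 — 2 statements merged into one kernel-verified Lean document; each statement's English description precedes it below -/
import Mathlib

section
/- Let X be a projective K3 surface over an algebraically closed field of characteristic ≠ 2,3, C a smooth rational curve on X, and P ∈ C a point such that Dec(X,C,P) = {f ∈ Aut(X) : f(C) = C, f(P) = P} is not almost abelian. Then the inertia group Ine(C) = {f ∈ Aut(X) : f|_C = id_C} contains a subgroup isomorphic to ℤ * ℤ. -/
/-!
Restricting to `C` maps `Dec(X,C,P)` to the solvable group `Aut(C,P)`. By the Tits alternative,
`Dec(X,C,P)` contains a free group `F₂`; the kernel `K` of `F₂ → Aut(C,P)` is free by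
Nielsen–Schreier, and it is not solvable because `F₂` is not (it surjects onto `S₅`) while
`F₂ / K` is. A non-solvable free group has two distinct generators, which span a copy of `F₂`
inside `K ⊆ Ine(C)`.
-/

/-- `G` is almost abelian. -/
def IsAlmostAbelian (G : Type*) [Group G] : Prop :=
  ∃ G0 : Subgroup G, G0.Normal ∧ G0.FiniteIndex ∧
    ∃ K : Subgroup G0, K.Normal ∧ Finite K ∧ ∀ a b : G0, a * b * a⁻¹ * b⁻¹ ∈ K

open Function

theorem FreeGroup.not_isSolvable_fin_two : ¬ Group.IsSolvable (FreeGroup (Fin 2)) := by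
  let σ : Equiv.Perm (Fin 5) := finRotate 5
  have hgen : Subgroup.closure {σ, Equiv.swap 0 (σ 0)} = ⊤ :=
    Equiv.Perm.closure_cycle_adjacent_swap isCycle_finRotate support_finRotate 0
  have hsurj : Surjective (FreeGroup.lift ![σ, Equiv.swap 0 (σ 0)]) := by
    rw [← MonoidHom.range_eq_top, FreeGroup.range_lift_eq_closure,
      Matrix.range_cons_cons_empty, hgen]
  exact fun _ ↦ Equiv.Perm.not_isSolvable_fin_5 (Group.isSolvable_of_surjective hsurj)

theorem FreeGroup.isSolvable_of_subsingleton {ι : Type*} [Subsingleton ι] :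
    Group.IsSolvable (FreeGroup ι) := by
  cases isEmpty_or_nonempty ι
  · infer_instance
  · have : Unique ι := uniqueOfSubsingleton (Classical.arbitrary ι)
    exact Group.isSolvable_of_isSolvable_injective
      (f := FreeGroup.mulEquivIntOfUnique.toMonoidHom) (MulEquiv.injective _)

theorem IsFreeGroup.exists_injective_freeGroup_fin_two {G : Type*} [Group G] [IsFreeGroup G]
    (hG : ¬ Group.IsSolvable G) : ∃ ψ : FreeGroup (Fin 2) →* G, Injective ψ := by
  let e := IsFreeGroup.toFreeGroup G
  obtain ⟨i, j, hij⟩ : ∃ i j : IsFreeGroup.Generators G, i ≠ j := by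
    by_contra! h
    have : Subsingleton (IsFreeGroup.Generators G) := ⟨h⟩
    have := FreeGroup.isSolvable_of_subsingleton (ι := IsFreeGroup.Generators G)
    exact hG (Group.isSolvable_of_isSolvable_injective (f := e.toMonoidHom) e.injective)
  exact ⟨e.symm.toMonoidHom.comp (FreeGroup.map ![i, j]),
    e.symm.injective.comp (FreeGroup.map_injective (injective_pair_iff_ne.mpr hij))⟩

theorem MonoidHom.not_isSolvable_ker {G H : Type*} [Group G] [Group H] [Group.IsSolvable H]
    (φ : G →* H) (hG : ¬ Group.IsSolvable G) : ¬ Group.IsSolvable φ.ker :=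
  fun _ ↦ hG (Group.isSolvable_of_ker_le_range φ.ker.subtype φ (by simp))

theorem MonoidHom.exists_injective_freeGroup_fin_two_ker {G H : Type*} [Group G] [Group H]
    [Group.IsSolvable H] (φ : G →* H) {ι : FreeGroup (Fin 2) →* G} (hι : Injective ι) :
    ∃ ψ : FreeGroup (Fin 2) →* G, Injective ψ ∧ ∀ x, ψ x ∈ φ.ker := by
  -- the kernel is free by Nielsen–Schreier (`subgroupIsFreeOfIsFree`)
  obtain ⟨ψ, hψ⟩ := IsFreeGroup.exists_injective_freeGroup_fin_two
    ((φ.comp ι).not_isSolvable_ker FreeGroup.not_isSolvable_fin_two)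
  exact ⟨ι.comp ((φ.comp ι).ker.subtype.comp ψ),
    hι.comp (Subtype.val_injective.comp hψ), fun x ↦ (ψ x).2⟩

theorem ine_contains_free_group_of_decP_not_almostAbelian
    -- the automorphism group of the K3 surface `X`
    (Aut : Type*) [Group Aut]
    -- Tits alternative for subgroups of `Aut(X)` (Theorem 3.2 (1))
    (tits : ∀ G : Subgroup Aut, ¬ IsAlmostAbelian G →
      ∃ S : Subgroup G, Nonempty (S ≃* FreeGroup (Fin 2)))
    -- the pointed decomposition group `Dec(X,C,P)` and the inertia group `Ine(C)`
    (DecP Ine : Subgroup Aut)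
    -- `Aut(C,P)`, the stabilizer of `P` in `Aut(C) = PGL₂`, a solvable group
    (AutCP : Type*) [Group AutCP] [Group.IsSolvable AutCP]
    -- the restriction homomorphism `f ↦ f|_C`
    (ρ : DecP →* AutCP)
    -- the kernel of the restriction lies in the inertia group `Ine(C)`
    (hker : ∀ f : DecP, f ∈ ρ.ker → (f : Aut) ∈ Ine)
    -- hypothesis: `Dec(X,C,P)` is not almost abelian
    (hDecP : ¬ IsAlmostAbelian DecP) :
    ∃ S : Subgroup Aut, S ≤ Ine ∧ Nonempty (S ≃* FreeGroup (Fin 2)) := by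
  obtain ⟨S₀, ⟨e⟩⟩ := tits DecP hDecP
  obtain ⟨ψ, hψ, hψker⟩ := ρ.exists_injective_freeGroup_fin_two_ker
    (ι := S₀.subtype.comp e.symm.toMonoidHom) (S₀.subtype_injective.comp e.symm.injective)
  have hinj : Injective (DecP.subtype.comp ψ) := DecP.subtype_injective.comp hψ
  refine ⟨(DecP.subtype.comp ψ).range, ?_, ⟨(MonoidHom.ofInjective hinj).symm⟩⟩
  rintro _ ⟨x, rfl⟩
  exact hker _ (hψker x)
end

section
/- Let X be a smooth complex projective surface and f ∈ Aut(X) an automorphism of positive entropy. If D is a nonzero effective divisor class with f*D = D in NS(X), then D² < 0. -/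
/-!
Suppose `D² ≥ 0` and let `v = x + i y` be a complex eigenvector of `f^*` with eigenvalue `μ`,
`|μ| > 1`. Because `f^*` is an isometry, `v·v`, `v̄·v` and `D·v` are multiplied by `μ²`, `|μ|²`
and `μ` respectively, hence vanish; so `x` and `y` are isotropic and orthogonal to `D`. In
signature `(1, n-1)` the only isotropic vectors orthogonal to a nonzero vector of nonnegative
square are its multiples, so `v ∈ ℂ D` is fixed by `f^*`, contradicting `μ ≠ 1`.
-/

open Matrix

theorem dotProduct_transpose_mul_mul_mulVec {ι R : Type*} [Fintype ι] [CommSemiring R]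
    (P M : Matrix ι ι R) (a b : ι → R) :
    a ⬝ᵥ (Pᵀ * M * P) *ᵥ b = (P *ᵥ a) ⬝ᵥ M *ᵥ (P *ᵥ b) := by
  rw [Matrix.mul_assoc, ← mulVec_mulVec, dotProduct_mulVec a, vecMul_transpose, mulVec_mulVec]

theorem dotProduct_mulVec_eq_zero_of_isometry {ι R : Type*} [Fintype ι] [CommRing R] [IsDomain R]
    {Q A : Matrix ι ι R} (hA : Aᵀ * Q * A = Q) {v w : ι → R} {μ ν : R}
    (hv : A *ᵥ v = μ • v) (hw : A *ᵥ w = ν • w) (hμν : μ * ν ≠ 1) :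
    v ⬝ᵥ Q *ᵥ w = 0 := by
  have h := dotProduct_transpose_mul_mul_mulVec A Q v w
  rw [hA, hv, hw, mulVec_smul, dotProduct_smul, smul_dotProduct, smul_smul, smul_eq_mul] at h
  have : (μ * ν - 1) * (v ⬝ᵥ Q *ᵥ w) = 0 := by linear_combination -h
  exact (mul_eq_zero.1 this).resolve_left (sub_ne_zero.2 hμν)

section Lorentzian

variable {n : ℕ}

def IsLorentzian (Q : Matrix (Fin n) (Fin n) ℝ) : Prop :=
  ∃ P : Matrix (Fin n) (Fin n) ℝ, IsUnit P.det ∧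
    Pᵀ * Q * P = diagonal (fun i : Fin n => if (i : ℕ) = 0 then (1 : ℝ) else -1)

theorem dotProduct_minkowski_mulVec {m : ℕ} (a b : Fin (m + 1) → ℝ) :
    a ⬝ᵥ diagonal (fun i : Fin (m + 1) => if (i : ℕ) = 0 then (1 : ℝ) else -1) *ᵥ b
      = a 0 * b 0 - ∑ i : Fin m, a i.succ * b i.succ := by
  simp [dotProduct, mulVec_diagonal, Fin.sum_univ_succ, sub_eq_add_neg, mul_comm]

theorem exists_eq_smul_of_minkowski {m : ℕ} {u w : Fin (m + 1) → ℝ} (hu : u ≠ 0)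
    (huu : ∑ i : Fin m, u i.succ * u i.succ ≤ u 0 * u 0)
    (hww : ∑ i : Fin m, w i.succ * w i.succ = w 0 * w 0)
    (huw : ∑ i : Fin m, u i.succ * w i.succ = u 0 * w 0) :
    ∃ t : ℝ, w = t • u := by
  have hsq : ∑ i : Fin m, (w 0 * u i.succ - u 0 * w i.succ) ^ 2 ≤ 0 := calc
    _ = w 0 * w 0 * ∑ i : Fin m, u i.succ * u i.succ
          - 2 * (w 0 * u 0) * ∑ i : Fin m, u i.succ * w i.succ
          + u 0 * u 0 * ∑ i : Fin m, w i.succ * w i.succ := by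
      simp only [Finset.mul_sum, ← Finset.sum_sub_distrib, ← Finset.sum_add_distrib]
      exact Finset.sum_congr rfl fun i _ => by ring
    _ ≤ 0 := by rw [huw, hww]; nlinarith [mul_self_nonneg (w 0)]
  have hprop (i : Fin m) : w 0 * u i.succ = u 0 * w i.succ := by
    have := (Finset.sum_eq_zero_iff_of_nonneg fun i _ => sq_nonneg _).1
      (le_antisymm hsq (by positivity)) i (Finset.mem_univ i)
    exact sub_eq_zero.1 (pow_eq_zero_iff two_ne_zero |>.1 this)
  have hu0 : u 0 ≠ 0 := by
    intro hu0
    refine hu (funext fun i => Fin.cases hu0 (fun j => ?_) i)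
    rw [hu0, mul_zero] at huu
    have hnonneg : ∀ i ∈ (Finset.univ : Finset (Fin m)), 0 ≤ u i.succ * u i.succ :=
      fun i _ => mul_self_nonneg _
    exact mul_self_eq_zero.1 <| (Finset.sum_eq_zero_iff_of_nonneg hnonneg).1
      (le_antisymm huu (Finset.sum_nonneg hnonneg)) j (Finset.mem_univ j)
  refine ⟨w 0 / u 0, funext fun i => Fin.cases ?_ (fun j => ?_) i⟩
  · simp [hu0]
  · simp [div_mul_eq_mul_div, hprop, hu0]

theorem IsLorentzian.exists_eq_smul_of_isotropic_of_orthogonal {Q : Matrix (Fin n) (Fin n) ℝ}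
    (hQ : IsLorentzian Q) {u w : Fin n → ℝ} (hu : u ≠ 0) (huu : 0 ≤ u ⬝ᵥ Q *ᵥ u)
    (hww : w ⬝ᵥ Q *ᵥ w = 0) (huw : u ⬝ᵥ Q *ᵥ w = 0) :
    ∃ t : ℝ, w = t • u := by
  obtain ⟨P, hP, hPQP⟩ := hQ
  obtain ⟨m, rfl⟩ : ∃ m, n = m + 1 :=
    Nat.exists_eq_succ_of_ne_zero fun h0 => hu (by subst h0; exact Subsingleton.elim _ _)
  have hPinv (z : Fin (m + 1) → ℝ) : P *ᵥ (P⁻¹ *ᵥ z) = z := by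
    rw [mulVec_mulVec, mul_nonsing_inv P hP, one_mulVec]
  have hform (a b : Fin (m + 1) → ℝ) : a ⬝ᵥ Q *ᵥ b
      = (P⁻¹ *ᵥ a) 0 * (P⁻¹ *ᵥ b) 0 - ∑ i : Fin m, (P⁻¹ *ᵥ a) i.succ * (P⁻¹ *ᵥ b) i.succ := by
    rw [← dotProduct_minkowski_mulVec, ← hPQP, dotProduct_transpose_mul_mul_mulVec, hPinv, hPinv]
  rw [hform] at huu hww huw
  obtain ⟨t, ht⟩ := exists_eq_smul_of_minkowski (u := P⁻¹ *ᵥ u) (w := P⁻¹ *ᵥ w)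
    (fun h0 => hu (by rw [← hPinv u, h0, mulVec_zero])) (by linarith) (by linarith) (by linarith)
  exact ⟨t, by rw [← hPinv w, ht, mulVec_smul, hPinv]⟩

end Lorentzian

section Complexification

open Complex

variable {ι : Type*}

theorem eq_smul_ofReal_of_re_im {v : ι → ℂ} {D : ι → ℝ} {s t : ℝ} (hs : re ∘ v = s • D)
    (ht : im ∘ v = t • D) :
    v = (⟨s, t⟩ : ℂ) • (ofReal ∘ D) := by
  funext i
  apply Complex.ext
  · simpa using congrFun hs i
  · simpa using congrFun ht i

variable [Fintype ι]

theorem re_dotProduct_map_ofReal_mulVec (Q : Matrix ι ι ℝ) (a b : ι → ℂ) :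
    (a ⬝ᵥ Q.map ofReal *ᵥ b).re = (re ∘ a) ⬝ᵥ Q *ᵥ (re ∘ b) - (im ∘ a) ⬝ᵥ Q *ᵥ (im ∘ b) := by
  simp only [dotProduct, mulVec, re_sum, mul_re, mul_im, map_apply, ofReal_re, ofReal_im,
    Function.comp_apply, Finset.mul_sum, ← Finset.sum_sub_distrib]
  exact Finset.sum_congr rfl fun i _ => Finset.sum_congr rfl fun j _ => by ring

theorem im_dotProduct_map_ofReal_mulVec (Q : Matrix ι ι ℝ) (a b : ι → ℂ) :
    (a ⬝ᵥ Q.map ofReal *ᵥ b).im = (re ∘ a) ⬝ᵥ Q *ᵥ (im ∘ b) + (im ∘ a) ⬝ᵥ Q *ᵥ (re ∘ b) := by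
  simp only [dotProduct, mulVec, im_sum, mul_re, mul_im, map_apply, ofReal_re, ofReal_im,
    Function.comp_apply, Finset.mul_sum, ← Finset.sum_add_distrib]
  exact Finset.sum_congr rfl fun i _ => Finset.sum_congr rfl fun j _ => by ring

theorem map_ofReal_mulVec_ofReal (A : Matrix ι ι ℝ) (x : ι → ℝ) :
    A.map ofReal *ᵥ (ofReal ∘ x) = ofReal ∘ (A *ᵥ x) :=
  funext fun i => (RingHom.map_mulVec ofRealHom A x i).symm

theorem map_ofReal_mulVec_star (A : Matrix ι ι ℝ) (v : ι → ℂ) :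
    A.map ofReal *ᵥ star v = star (A.map ofReal *ᵥ v) := by
  funext i
  simp [mulVec, dotProduct, star_sum]

theorem map_ofReal_transpose_mul_mul {Q A : Matrix ι ι ℝ} (hA : Aᵀ * Q * A = Q) :
    (A.map ofReal)ᵀ * Q.map ofReal * A.map ofReal = Q.map ofReal := by
  have h := congrArg (Matrix.map · ofRealHom) hA
  simp only [Matrix.map_mul, transpose_map] at h
  exact h

theorem mul_ne_one_of_one_lt_norm {𝕜 : Type*} [NormedDivisionRing 𝕜] {a b : 𝕜}
    (ha : 1 < ‖a‖) (hb : 1 < ‖b‖) : a * b ≠ 1 := by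
  intro hab
  have := congrArg norm hab
  rw [norm_mul, norm_one] at this
  nlinarith

variable {Q A : Matrix ι ι ℝ} {v : ι → ℂ} {μ : ℂ}

theorem isotropic_re_im_of_eigenvector (hA : Aᵀ * Q * A = Q) (hv : A.map ofReal *ᵥ v = μ • v)
    (hμ : 1 < ‖μ‖) :
    (re ∘ v) ⬝ᵥ Q *ᵥ (re ∘ v) = 0 ∧ (im ∘ v) ⬝ᵥ Q *ᵥ (im ∘ v) = 0 := by
  have hAℂ := map_ofReal_transpose_mul_mul hA
  have hv' : A.map ofReal *ᵥ star v = star μ • star v := by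
    rw [map_ofReal_mulVec_star, hv, star_smul]
  have hvv := dotProduct_mulVec_eq_zero_of_isometry hAℂ hv hv (mul_ne_one_of_one_lt_norm hμ hμ)
  have hv'v := dotProduct_mulVec_eq_zero_of_isometry hAℂ hv' hv
    (mul_ne_one_of_one_lt_norm (by rwa [norm_star]) hμ)
  have hre := congrArg re hvv
  have hre' := congrArg re hv'v
  rw [re_dotProduct_map_ofReal_mulVec] at hre hre'
  have hstar_re : re ∘ star v = re ∘ v := funext fun i => conj_re (v i)
  have hstar_im : im ∘ star v = -(im ∘ v) := funext fun i => conj_im (v i)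
  rw [hstar_re, hstar_im, neg_dotProduct] at hre'
  constructor <;> simp only [zero_re] at hre hre' <;> linarith

theorem orthogonal_re_im_of_eigenvector (hA : Aᵀ * Q * A = Q) (hv : A.map ofReal *ᵥ v = μ • v)
    (hμ : μ ≠ 1) {D : ι → ℝ} (hD : A *ᵥ D = D) :
    D ⬝ᵥ Q *ᵥ (re ∘ v) = 0 ∧ D ⬝ᵥ Q *ᵥ (im ∘ v) = 0 := by
  have hDℂ : A.map ofReal *ᵥ (ofReal ∘ D) = (1 : ℂ) • (ofReal ∘ D) := by
    rw [map_ofReal_mulVec_ofReal, hD, one_smul]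
  have hDv := dotProduct_mulVec_eq_zero_of_isometry (map_ofReal_transpose_mul_mul hA) hDℂ hv
    (by rwa [one_mul])
  have hre := congrArg re hDv
  have him := congrArg im hDv
  rw [re_dotProduct_map_ofReal_mulVec] at hre
  rw [im_dotProduct_map_ofReal_mulVec] at him
  have hD_re : re ∘ ofReal ∘ D = D := funext fun i => ofReal_re (D i)
  have hD_im : im ∘ ofReal ∘ D = 0 := funext fun i => ofReal_im (D i)
  simp only [hD_re, hD_im, zero_dotProduct, sub_zero, add_zero, zero_re, zero_im] at hre him
  exact ⟨hre, him⟩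

end Complexification

theorem negative_square_of_invariant_effective_class_general
    (n : ℕ) (Q : Matrix (Fin n) (Fin n) ℝ)
    -- Hodge index: the intersection form has signature `(1, n-1)`
    (hsig : ∃ P : Matrix (Fin n) (Fin n) ℝ, IsUnit P.det ∧
      Pᵀ * Q * P = Matrix.diagonal (fun i : Fin n => if (i : ℕ) = 0 then (1 : ℝ) else -1))
    -- `A = f^*` is an isometry of `NS(X) ⊗ ℝ`
    (A : Matrix (Fin n) (Fin n) ℝ)
    (hisom : Aᵀ * Q * A = Q)
    -- `f` has positive entropy: the spectral radius of `f^*` exceeds `1`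
    (hentropy : ∃ μ : ℂ, 1 < ‖μ‖ ∧
      Module.End.HasEigenvalue (Matrix.toLin' (A.map Complex.ofReal)) μ)
    -- `D` is a nonzero effective class fixed by `f^*`
    (D : Fin n → ℝ) (hD : D ≠ 0)
    (hfix : A.mulVec D = D) :
    D ⬝ᵥ Q.mulVec D < 0 := by
  by_contra! hDD
  obtain ⟨μ, hμ, hμA⟩ := hentropy
  obtain ⟨v, hv⟩ := hμA.exists_hasEigenvector
  have hAv : A.map Complex.ofReal *ᵥ v = μ • v := by simpa using hv.apply_eq_smul
  have hμ1 : μ ≠ 1 := by rintro rfl; simp at hμ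
  have hQ : IsLorentzian Q := hsig
  obtain ⟨hxx, hyy⟩ := isotropic_re_im_of_eigenvector hisom hAv hμ
  obtain ⟨hDx, hDy⟩ := orthogonal_re_im_of_eigenvector hisom hAv hμ1 hfix
  obtain ⟨s, hs⟩ := hQ.exists_eq_smul_of_isotropic_of_orthogonal hD hDD hxx hDx
  obtain ⟨t, ht⟩ := hQ.exists_eq_smul_of_isotropic_of_orthogonal hD hDD hyy hDy
  have hAv' : A.map Complex.ofReal *ᵥ v = (1 : ℂ) • v := by
    rw [eq_smul_ofReal_of_re_im hs ht, mulVec_smul, map_ofReal_mulVec_ofReal, hfix, one_smul]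
  exact hμ1 (smul_left_injective ℂ hv.2 (hAv.symm.trans hAv'))

theorem negative_square_of_invariant_effective_class
    (n : ℕ) (Q : Matrix (Fin n) (Fin n) ℝ)
    (hsymm : Q.IsSymm)
    -- Hodge index: the intersection form has signature `(1, n-1)`
    (hsig : ∃ P : Matrix (Fin n) (Fin n) ℝ, IsUnit P.det ∧
      Pᵀ * Q * P = Matrix.diagonal (fun i : Fin n => if (i : ℕ) = 0 then (1 : ℝ) else -1))
    -- `A = f^*` is an isometry of `NS(X) ⊗ ℝ`
    (A : Matrix (Fin n) (Fin n) ℝ) (hA : IsUnit A.det)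
    (hisom : Aᵀ * Q * A = Q)
    -- `f` has positive entropy: the spectral radius of `f^*` exceeds `1`
    (hentropy : ∃ μ : ℂ, 1 < ‖μ‖ ∧
      Module.End.HasEigenvalue (Matrix.toLin' (A.map Complex.ofReal)) μ)
    -- an ample class `h`
    (h : Fin n → ℝ) (hample : 0 < h ⬝ᵥ Q.mulVec h)
    -- `D` is a nonzero effective class fixed by `f^*`
    (D : Fin n → ℝ) (hD : D ≠ 0)
    (heff : 0 < D ⬝ᵥ Q.mulVec h)
    (hfix : A.mulVec D = D) :
    D ⬝ᵥ Q.mulVec D < 0 :=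
  negative_square_of_invariant_effective_class_general n Q hsig A hisom hentropy D hD hfix
end
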